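/- (Ensemble quantum Fisher information identity used in the proof of Theorem 4.) Let K be a positive integer, q_1,…,q_K > 0 with Σ_k q_k = 1, η_1,…,η_K ∈ ℂ^d unit vectors, H_S an Hermitian d×d matrix, and ε_1,…,ε_K ∈ ℝ. Let H_A = diag(ε_1,…,ε_K) acting on ℂ^K with standard basis {e_k}, and let σ = Σ_k q_k |η_k⟩⟨η_k| ⊗ |e_k⟩⟨e_k| be the corresponding density matrix on ℂ^d ⊗ ℂ^K. Then F_{H_S ⊗ I_K + I_d ⊗ H_A}(σ) = Σ_k q_k F_{H_S}(|η_k⟩⟨η_k|) = 4·Σ_k q_k V_{H_S}(η_k). -/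

import Mathlib

open Matrix Complex Filter Kronecker
open scoped ComplexOrder

noncomputable section

/-- n-fold Kronecker power of a matrix, indexed by functions `Fin n → Fin d`. -/
def kronPow {d : ℕ} (X : Matrix (Fin d) (Fin d) ℂ) (n : ℕ) :
    Matrix (Fin n → Fin d) (Fin n → Fin d) ℂ :=
  Matrix.of fun i j => ∏ k, X (i k) (j k)

/-- The `n`-copy (non-interacting) Hamiltonian `Σᵢ I^{⊗(i-1)} ⊗ H ⊗ I^{⊗(n-i)}`. -/
def nCopyHam {d : ℕ} (H : Matrix (Fin d) (Fin d) ℂ) (n : ℕ) :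
    Matrix (Fin n → Fin d) (Fin n → Fin d) ℂ :=
  ∑ k : Fin n, Matrix.of fun i j =>
    H (i k) (j k) * ∏ l ∈ Finset.univ.erase k, (if i l = j l then (1 : ℂ) else 0)

/-- Time evolution unitary `e^{-iHt}`. -/
def timeEvol {m : Type*} [Fintype m] [DecidableEq m] (H : Matrix m m ℂ) (t : ℝ) :
    Matrix m m ℂ :=
  NormedSpace.exp ((-(Complex.I * (t : ℂ))) • H)

/-- The positive semidefinite square root, as `Matrix.PosSemidef.sqrt` was defined in Mathlib
of December 2024 (removed since). -/
def Matrix.PosSemidef.sqrt {𝕜 : Type*} [RCLike 𝕜] {n : Type*} [Fintype n] [DecidableEq n]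
    {A : Matrix n n 𝕜} (hA : A.PosSemidef) : Matrix n n 𝕜 :=
  hA.1.eigenvectorUnitary.1 * diagonal ((↑) ∘ (√·) ∘ hA.1.eigenvalues) *
    (star hA.1.eigenvectorUnitary : Matrix n n 𝕜)

/-- Trace norm `‖A‖₁ = Tr √(AᴴA)`. -/
def traceNorm {m : Type*} [Fintype m] [DecidableEq m] (A : Matrix m m ℂ) : ℝ :=
  ((Matrix.posSemidef_conjTranspose_mul_self A).sqrt.trace).re

/-- A quantum channel: a map admitting a Kraus representation. -/
def IsQuantumChannel {m n : Type*} [Fintype m] [DecidableEq m] [Fintype n] [DecidableEq n]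
    (E : Matrix m m ℂ → Matrix n n ℂ) : Prop :=
  ∃ (K : ℕ) (A : Fin K → Matrix n m ℂ),
    (∀ X, E X = ∑ k, A k * X * (A k)ᴴ) ∧ (∑ k, (A k)ᴴ * A k = 1)

/-- Time-translation invariance of a map w.r.t. input/output Hamiltonians. -/
def IsTI {m n : Type*} [Fintype m] [DecidableEq m] [Fintype n] [DecidableEq n]
    (Hin : Matrix m m ℂ) (Hout : Matrix n n ℂ)
    (E : Matrix m m ℂ → Matrix n n ℂ) : Prop :=
  ∀ (t : ℝ) (X : Matrix m m ℂ),
    timeEvol Hout t * E X * timeEvol Hout (-t) =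
      E (timeEvol Hin t * X * timeEvol Hin (-t))

/-- Energy variance of a (unit) vector. -/
def varVec {m : Type*} [Fintype m] (H : Matrix m m ℂ) (ψ : m → ℂ) : ℝ :=
  (star ψ ⬝ᵥ ((H * H) *ᵥ ψ)).re - ((star ψ ⬝ᵥ (H *ᵥ ψ)).re) ^ 2

/-- The quantum Fisher information formula for a given spectral decomposition data. -/
def qfiOf {m : Type*} [Fintype m] (H : Matrix m m ℂ) (p : m → ℝ) (φ : m → m → ℂ) : ℝ :=
  2 * ∑ j, ∑ k,
    if 0 < p j + p k then
      (p j - p k) ^ 2 / (p j + p k) * Complex.normSq (star (φ j) ⬝ᵥ (H *ᵥ φ k))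
    else 0

/-- Quantum Fisher information of a Hermitian (e.g. density) matrix `ρ` w.r.t. `H`. -/
def QFI {m : Type*} [Fintype m] [DecidableEq m] {ρ : Matrix m m ℂ}
    (hρ : ρ.IsHermitian) (H : Matrix m m ℂ) : ℝ :=
  qfiOf H hρ.eigenvalues (fun j i => hρ.eigenvectorBasis j i)

open scoped Classical in
/-- Total positive-semidefinite square root (zero on non-PSD inputs). -/
def msqrt {m : Type*} [Fintype m] [DecidableEq m] (A : Matrix m m ℂ) : Matrix m m ℂ :=
  if h : A.PosSemidef then h.sqrt else 0

/-- Fidelity `Fid(ρ,σ) = (Tr √(√ρ σ √ρ))² = ‖√σ √ρ‖₁²`. -/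
def fid {m : Type*} [Fintype m] [DecidableEq m] (ρ σ : Matrix m m ℂ) : ℝ :=
  (traceNorm (msqrt σ * msqrt ρ)) ^ 2

/-- Density matrix. -/
def IsDensityMatrix {m : Type*} [Fintype m] (ρ : Matrix m m ℂ) : Prop :=
  ρ.PosSemidef ∧ ρ.trace = 1



/-!
The formula defining `QFI` does not depend on the orthonormal eigenbasis used: if `V` and `W` both
diagonalize `ρ`, the unitary `U = Vᴴ W` only mixes eigenvectors with equal eigenvalues, so it
intertwines the Schur multipliers `A ↦ (w(p_j, p_k) A_jk)` of the two eigenvalue lists, and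
`∑ w(p_j, p_k) |A_jk|² = Tr((w ⊙ A) Aᴴ)` is unchanged under `A ↦ Uᴴ A U`.
For `σ` everything is block diagonal over `k`: `σ`, the Hamiltonian `H_S + ε_k` and an eigenbasis
made of orthonormal bases extending each `η_k`. So the sum splits into blocks, the shift `ε_k`
touches only diagonal entries, where the weight vanishes, and `q_k` factors out since the weight is
homogeneous. For a pure state only the weights `w(1, 0) = w(0, 1) = 1` survive, which gives
`4 ∑_{u ⊥ η} |⟨u|H|η⟩|² = 4 (‖Hη‖² - ⟨η|H|η⟩²)`.
-/

def qfiWeight (x y : ℝ) : ℝ := if 0 < x + y then (x - y) ^ 2 / (x + y) else 0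

lemma qfiWeight_self (x : ℝ) : qfiWeight x x = 0 := by
  simp [qfiWeight]

lemma qfiWeight_mul_mul {c : ℝ} (hc : 0 ≤ c) (x y : ℝ) :
    qfiWeight (c * x) (c * y) = c * qfiWeight x y := by
  rcases hc.eq_or_lt with rfl | hc
  · simp [qfiWeight]
  · simp only [qfiWeight, ← mul_add, mul_pos_iff_of_pos_left hc, ← mul_sub]
    split_ifs
    · field_simp
    · simp

section
variable {m : Type*} [Fintype m]

def qfiSum (p : m → ℝ) (A : Matrix m m ℂ) : ℝ :=
  ∑ j, ∑ k, qfiWeight (p j) (p k) * normSq (A j k)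

lemma conjTranspose_mul_mul_apply (V A : Matrix m m ℂ) (i j : m) :
    (Vᴴ * A * V) i j = star (Vᵀ i) ⬝ᵥ (A *ᵥ Vᵀ j) := by
  simp only [Matrix.mul_apply, conjTranspose_apply, dotProduct, mulVec, Pi.star_apply,
    transpose_apply, Finset.sum_mul, Finset.mul_sum]
  rw [Finset.sum_comm]
  simp only [mul_assoc]

lemma qfiOf_transpose (H : Matrix m m ℂ) (p : m → ℝ) (V : Matrix m m ℂ) :
    qfiOf H p Vᵀ = 2 * qfiSum p (Vᴴ * H * V) := by
  simp only [qfiOf, qfiSum, qfiWeight, conjTranspose_mul_mul_apply, ite_mul, zero_mul]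

lemma ofReal_qfiSum (p : m → ℝ) (A : Matrix m m ℂ) :
    (qfiSum p A : ℂ) = trace ((of fun j k => (qfiWeight (p j) (p k) : ℂ)) ⊙ A * Aᴴ) := by
  simp only [qfiSum, trace, diag_apply, mul_apply, hadamard_apply, of_apply, conjTranspose_apply,
    ofReal_sum, ofReal_mul, RCLike.star_def, ← Complex.mul_conj, mul_assoc]

lemma hadamard_conjTranspose_mul_mul {β : Type*} {p p' : m → β} (g : β → β → ℂ)
    {U : Matrix m m ℂ} (hU : ∀ j a, U j a ≠ 0 → p j = p' a) (A : Matrix m m ℂ) :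
    (of fun a b => g (p' a) (p' b)) ⊙ (Uᴴ * A * U) =
      Uᴴ * ((of fun j k => g (p j) (p k)) ⊙ A) * U := by
  ext a b
  simp only [hadamard_apply, of_apply, mul_apply, conjTranspose_apply, Finset.mul_sum,
    Finset.sum_mul]
  refine Finset.sum_congr rfl fun k _ => Finset.sum_congr rfl fun j _ => ?_
  by_cases hja : U j a = 0
  · simp [hja]
  by_cases hkb : U k b = 0
  · simp [hkb]
  rw [hU j a hja, hU k b hkb]
  ring

lemma qfiSum_conjTranspose_mul_mul [DecidableEq m] {p p' : m → ℝ} {U : Matrix m m ℂ}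
    (hU : U ∈ unitaryGroup m ℂ) (hsupp : ∀ j a, U j a ≠ 0 → p j = p' a)
    (A : Matrix m m ℂ) : qfiSum p' (Uᴴ * A * U) = qfiSum p A := by
  have hUU : U * Uᴴ = 1 := mem_unitaryGroup_iff.mp hU
  apply ofReal_injective
  rw [ofReal_qfiSum, ofReal_qfiSum,
    hadamard_conjTranspose_mul_mul (fun x y => (qfiWeight x y : ℂ)) hsupp]
  generalize (of fun j k => (qfiWeight (p j) (p k) : ℂ)) ⊙ A = X
  calc trace (Uᴴ * X * U * (Uᴴ * A * U)ᴴ) = trace (Uᴴ * (X * Aᴴ * U)) := by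
        simp only [conjTranspose_mul, conjTranspose_conjTranspose, Matrix.mul_assoc,
          ← Matrix.mul_assoc U, hUU, Matrix.one_mul]
    _ = trace (X * Aᴴ) := by rw [trace_mul_comm, Matrix.mul_assoc, hUU, Matrix.mul_one]

lemma eq_of_diagonal_mul_eq_mul_diagonal [DecidableEq m] {p p' : m → ℝ} {U : Matrix m m ℂ}
    (h : diagonal (fun j => (p j : ℂ)) * U = U * diagonal (fun a => (p' a : ℂ))) (j a : m)
    (hja : U j a ≠ 0) : p j = p' a := by
  have := congrFun (congrFun h j) a
  simp only [diagonal_mul, mul_diagonal, mul_comm (U j a)] at this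
  exact_mod_cast mul_right_cancel₀ hja this

lemma Matrix.IsHermitian.mul_eigenvectorUnitary [DecidableEq m] {ρ : Matrix m m ℂ}
    (hρ : ρ.IsHermitian) :
    ρ * (hρ.eigenvectorUnitary : Matrix m m ℂ) =
      hρ.eigenvectorUnitary * diagonal (fun j => (hρ.eigenvalues j : ℂ)) := by
  have hdiag := hρ.conjStarAlgAut_star_eigenvectorUnitary
  simp only [Unitary.conjStarAlgAut_apply, Unitary.coe_star, star_star] at hdiag
  change _ = _ * diagonal (RCLike.ofReal ∘ hρ.eigenvalues)
  rw [← hdiag, ← Matrix.mul_assoc, ← Matrix.mul_assoc,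
    Unitary.mul_star_self_of_mem hρ.eigenvectorUnitary.2, Matrix.one_mul]

lemma QFI_eq_two_mul_qfiSum [DecidableEq m] {ρ : Matrix m m ℂ} (hρ : ρ.IsHermitian)
    (H : Matrix m m ℂ) {V : Matrix m m ℂ} (hV : V ∈ unitaryGroup m ℂ) {p : m → ℝ}
    (hρV : ρ * V = V * diagonal (fun j => (p j : ℂ))) :
    QFI hρ H = 2 * qfiSum p (Vᴴ * H * V) := by
  set W : Matrix m m ℂ := ↑hρ.eigenvectorUnitary
  have hVV : Vᴴ * V = 1 := mem_unitaryGroup_iff'.mp hV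
  have hVV' : V * Vᴴ = 1 := mem_unitaryGroup_iff.mp hV
  have hU : Vᴴ * W ∈ unitaryGroup m ℂ :=
    mul_mem (Unitary.star_mem hV) hρ.eigenvectorUnitary.2
  have hVρ : Vᴴ * ρ = diagonal (fun j => (p j : ℂ)) * Vᴴ :=
    calc Vᴴ * ρ = Vᴴ * (ρ * V) * Vᴴ := by
          rw [Matrix.mul_assoc, Matrix.mul_assoc, hVV', Matrix.mul_one]
      _ = _ := by rw [hρV, ← Matrix.mul_assoc, hVV, Matrix.one_mul]
  have hintertwine : diagonal (fun j => (p j : ℂ)) * (Vᴴ * W) =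
      Vᴴ * W * diagonal (fun j => (hρ.eigenvalues j : ℂ)) := by
    rw [← Matrix.mul_assoc, ← hVρ, Matrix.mul_assoc, hρ.mul_eigenvectorUnitary,
      Matrix.mul_assoc]
  have hconj : (Vᴴ * W)ᴴ * (Vᴴ * H * V) * (Vᴴ * W) = Wᴴ * H * W := by
    simp only [conjTranspose_mul, conjTranspose_conjTranspose, Matrix.mul_assoc]
    simp only [← Matrix.mul_assoc V, hVV', Matrix.one_mul]
  change qfiOf H hρ.eigenvalues Wᵀ = _
  rw [qfiOf_transpose, ← hconj,
    qfiSum_conjTranspose_mul_mul hU (eq_of_diagonal_mul_eq_mul_diagonal hintertwine)]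

lemma qfiSum_blockDiagonal {o : Type*} [Fintype o] [DecidableEq o] (p : o → m → ℝ)
    (B : o → Matrix m m ℂ) :
    qfiSum (fun x : m × o => p x.2 x.1) (blockDiagonal B) = ∑ k, qfiSum (p k) (B k) := by
  simp only [qfiSum, Fintype.sum_prod_type, blockDiagonal_apply', apply_ite normSq, map_zero,
    mul_ite, mul_zero, Finset.sum_ite_eq, Finset.mem_univ, if_true]
  rw [Finset.sum_comm]

lemma qfiSum_add_smul_one [DecidableEq m] (p : m → ℝ) (B : Matrix m m ℂ) (c : ℂ) :
    qfiSum p (B + c • 1) = qfiSum p B := by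
  refine Finset.sum_congr rfl fun j _ => Finset.sum_congr rfl fun k _ => ?_
  rcases eq_or_ne j k with rfl | hjk
  · simp [qfiWeight_self]
  · simp [one_apply_ne hjk]

lemma qfiSum_smul {c : ℝ} (hc : 0 ≤ c) (p : m → ℝ) (B : Matrix m m ℂ) :
    qfiSum (c • p) B = c * qfiSum p B := by
  simp only [qfiSum, Pi.smul_apply, smul_eq_mul, qfiWeight_mul_mul hc, Finset.mul_sum, mul_assoc]

lemma qfiSum_single_one [DecidableEq m] {M : Matrix m m ℂ} (hM : M.IsHermitian) (i : m) :
    qfiSum (Pi.single i 1) M = 2 * (∑ j, normSq (M j i) - normSq (M i i)) := by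
  have hw : ∀ j k,
      qfiWeight (Pi.single (M := fun _ => ℝ) i 1 j) (Pi.single (M := fun _ => ℝ) i 1 k) =
        (if j = i then 1 else 0) + (if k = i then 1 else 0) -
          2 * ((if j = i then 1 else 0) * (if k = i then 1 else 0)) := by
    intro j k
    by_cases hj : j = i <;> by_cases hk : k = i <;> norm_num [qfiWeight, hj, hk]
  have hrow : ∀ k, normSq (M i k) = normSq (M k i) := fun k => by
    rw [← hM.apply k i, RCLike.star_def, normSq_conj]
  simp only [qfiSum, hw, add_mul, sub_mul, Finset.sum_add_distrib, Finset.sum_sub_distrib,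
    ite_mul, one_mul, zero_mul, Finset.sum_ite_irrel, Finset.sum_const_zero, Finset.sum_ite_eq',
    Finset.mem_univ, if_true, hrow, mul_assoc, ← Finset.mul_sum]
  ring

lemma Matrix.IsHermitian.mul_self_apply_self {M : Matrix m m ℂ} (hM : M.IsHermitian) (i : m) :
    (M * M) i i = ∑ j, (normSq (M j i) : ℂ) := by
  simp only [Matrix.mul_apply, ← hM.apply i, RCLike.star_def, ← Complex.normSq_eq_conj_mul_self]

lemma exists_mem_unitaryGroup_transpose_apply_eq [DecidableEq m] {η : m → ℂ}
    (hη : star η ⬝ᵥ η = 1) : ∃ i, ∃ V ∈ unitaryGroup m ℂ, Vᵀ i = η := by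
  obtain ⟨i⟩ : Nonempty m := by
    by_contra h
    rw [not_nonempty_iff] at h
    simp [dotProduct] at hη
  have hunit : Orthonormal ℂ (({i} : Set m).domRestrict fun _ => WithLp.toLp 2 η) := by
    rw [orthonormal_iff_ite]
    rintro ⟨j, hj⟩ ⟨k, hk⟩
    obtain rfl := Set.mem_singleton_iff.mp hj
    obtain rfl := Set.mem_singleton_iff.mp hk
    change inner ℂ (WithLp.toLp 2 η) (WithLp.toLp 2 η) = _
    rw [EuclideanSpace.inner_toLp_toLp, dotProduct_comm, hη, if_pos rfl]
  obtain ⟨b, hb⟩ := hunit.exists_orthonormalBasis_extension_of_card_eq (by simp)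
  refine ⟨i, _, (EuclideanSpace.basisFun m ℂ).toMatrix_orthonormalBasis_mem_unitary b, ?_⟩
  ext a
  rw [transpose_apply, Module.Basis.toMatrix_apply, OrthonormalBasis.coe_toBasis_repr_apply,
    EuclideanSpace.basisFun_repr, hb i rfl]

lemma vecMulVec_mul_of_transpose_apply_eq [DecidableEq m] {η : m → ℂ} {V : Matrix m m ℂ}
    (hV : V ∈ unitaryGroup m ℂ) {i : m} (hcol : Vᵀ i = η) :
    vecMulVec η (star η) * V = V * diagonal (fun j => ((Pi.single i 1 : m → ℝ) j : ℂ)) := by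
  have hVV := congrFun (mem_unitaryGroup_iff'.mp hV) i
  subst hcol
  ext a j
  have := congrFun hVV j
  simp only [Matrix.mul_apply, star_apply, one_apply] at this
  rw [mul_diagonal]
  simp only [Matrix.mul_apply, vecMulVec_apply, Pi.star_apply, transpose_apply,
    mul_assoc, ← Finset.mul_sum, this, Pi.single_apply]
  rcases eq_or_ne i j with rfl | h
  · simp
  · simp [h, h.symm]

lemma QFI_vecMulVec_self [DecidableEq m] {η : m → ℂ} (hη : star η ⬝ᵥ η = 1)
    {H : Matrix m m ℂ} (hH : H.IsHermitian) (h : (vecMulVec η (star η)).IsHermitian) :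
    QFI h H = 4 * varVec H η := by
  obtain ⟨i, V, hV, hcol⟩ := exists_mem_unitaryGroup_transpose_apply_eq hη
  obtain ⟨M, hMdef⟩ : ∃ M, M = Vᴴ * H * V := ⟨_, rfl⟩
  have hM : M.IsHermitian := hMdef ▸ isHermitian_conjTranspose_mul_mul V hH
  have hVV : V * Vᴴ = 1 := mem_unitaryGroup_iff.mp hV
  have hMM : M * M = Vᴴ * (H * H) * V := by
    simp only [hMdef, Matrix.mul_assoc]
    rw [← Matrix.mul_assoc V Vᴴ, hVV, Matrix.one_mul]
  have hMii : normSq (M i i) = (M i i).re ^ 2 := by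
    rw [normSq_apply, conj_eq_iff_im.mp (hM.apply i i)]
    ring
  have hvar : varVec H η = ∑ j, normSq (M j i) - normSq (M i i) := by
    rw [varVec, ← hcol, ← conjTranspose_mul_mul_apply, ← conjTranspose_mul_mul_apply, ← hMM,
      ← hMdef, hM.mul_self_apply_self, ← ofReal_sum, ofReal_re, hMii]
  rw [QFI_eq_two_mul_qfiSum h H hV (vecMulVec_mul_of_transpose_apply_eq hV hcol), ← hMdef,
    qfiSum_single_one hM, hvar]
  ring

end

lemma sum_kronecker_single_eq_blockDiagonal {m n o α : Type*} [Fintype o] [DecidableEq o]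
    [Semiring α] (A : o → Matrix m n α) :
    ∑ k, (A k ⊗ₖ Matrix.single k k (1 : α)) = blockDiagonal A := by
  ext ⟨i, k⟩ ⟨j, k'⟩
  simp only [Matrix.sum_apply, kroneckerMap_apply, single_apply, blockDiagonal_apply']
  rcases eq_or_ne k k' with rfl | hkk'
  · simp
  · rw [if_neg hkk']
    refine Finset.sum_eq_zero fun c _ => ?_
    rw [if_neg fun h => hkk' (h.1.symm.trans h.2), mul_zero]

lemma kronecker_one_add_one_kronecker_diagonal {m o α : Type*} [DecidableEq m] [DecidableEq o]
    [CommRing α] (A : Matrix m m α) (e : o → α) :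
    A ⊗ₖ (1 : Matrix o o α) + (1 : Matrix m m α) ⊗ₖ diagonal e =
      blockDiagonal fun k => A + e k • 1 := by
  ext ⟨i, k⟩ ⟨j, k'⟩
  simp only [Matrix.add_apply, kroneckerMap_apply, blockDiagonal_apply', Matrix.smul_apply]
  rcases eq_or_ne k k' with rfl | hkk'
  · simp [mul_comm]
  · simp [hkk']

section
variable {m o : Type*} [Fintype m] [DecidableEq m] [Fintype o] [DecidableEq o]

lemma blockDiagonal_mem_unitaryGroup {V : o → Matrix m m ℂ}
    (hV : ∀ k, V k ∈ unitaryGroup m ℂ) : blockDiagonal V ∈ unitaryGroup (m × o) ℂ := by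
  rw [mem_unitaryGroup_iff, star_eq_conjTranspose, blockDiagonal_conjTranspose,
    ← blockDiagonal_mul]
  have hVV : (fun k => V k * (V k)ᴴ) = 1 := funext fun k => mem_unitaryGroup_iff.mp (hV k)
  rw [hVV, blockDiagonal_one]

lemma blockDiagonal_mul_blockDiagonal_eq_mul_diagonal {ρ V : o → Matrix m m ℂ}
    {p : o → m → ℝ} (h : ∀ k, ρ k * V k = V k * diagonal (fun i => (p k i : ℂ))) :
    blockDiagonal ρ * blockDiagonal V =
      blockDiagonal V * diagonal (fun x : m × o => (p x.2 x.1 : ℂ)) := by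
  rw [← blockDiagonal_mul, funext h, blockDiagonal_mul, blockDiagonal_diagonal]

end

lemma conjTranspose_mul_add_smul_one_mul {m : Type*} [Fintype m] [DecidableEq m]
    {V : Matrix m m ℂ} (hV : V ∈ unitaryGroup m ℂ) (A : Matrix m m ℂ) (c : ℂ) :
    Vᴴ * (A + c • 1) * V = Vᴴ * A * V + c • 1 := by
  have hVV : Vᴴ * V = 1 := mem_unitaryGroup_iff'.mp hV
  rw [Matrix.mul_add, Matrix.add_mul, Matrix.mul_smul, Matrix.smul_mul, Matrix.mul_one, hVV]

theorem ensemble_qfi_identity_general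
    {d K : ℕ}
    (q : Fin K → ℝ) (hq : ∀ k, 0 < q k)
    (η : Fin K → Fin d → ℂ) (hη : ∀ k, star (η k) ⬝ᵥ η k = 1)
    (HS : Matrix (Fin d) (Fin d) ℂ) (hHS : HS.IsHermitian)
    (ε : Fin K → ℝ)
    (σ : Matrix (Fin d × Fin K) (Fin d × Fin K) ℂ)
    (hσdef : σ = ∑ k, ((q k : ℝ) : ℂ) •
      (Matrix.vecMulVec (η k) (star (η k)) ⊗ₖ Matrix.single k k (1 : ℂ)))
    (hσ : σ.IsHermitian)
    (hηherm : ∀ k, (Matrix.vecMulVec (η k) (star (η k))).IsHermitian) :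
    QFI hσ (HS ⊗ₖ (1 : Matrix (Fin K) (Fin K) ℂ) +
        (1 : Matrix (Fin d) (Fin d) ℂ) ⊗ₖ Matrix.diagonal (fun k => ((ε k : ℝ) : ℂ))) =
      ∑ k, q k * QFI (hηherm k) HS ∧
    ∑ k, q k * QFI (hηherm k) HS = 4 * ∑ k, q k * varVec HS (η k) := by
  choose i V hV hcol using fun k => exists_mem_unitaryGroup_transpose_apply_eq (hη k)
  have hηV k := vecMulVec_mul_of_transpose_apply_eq (hV k) (hcol k)
  have hσblock : σ = blockDiagonal fun k => (q k : ℂ) • vecMulVec (η k) (star (η k)) := by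
    simp_rw [hσdef, ← smul_kronecker, sum_kronecker_single_eq_blockDiagonal]
  let p : Fin K → Fin d → ℝ := fun k => q k • Pi.single (i k) 1
  have hσV : σ * blockDiagonal V = blockDiagonal V * diagonal (fun x => (p x.2 x.1 : ℂ)) := by
    rw [hσblock]
    refine blockDiagonal_mul_blockDiagonal_eq_mul_diagonal (p := p) fun k => ?_
    rw [Matrix.smul_mul, hηV k, ← Matrix.mul_smul, ← diagonal_smul]
    congr 2
    funext j
    simp [p]
  refine ⟨?_, ?_⟩
  · rw [QFI_eq_two_mul_qfiSum hσ _ (blockDiagonal_mem_unitaryGroup hV) hσV,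
      kronecker_one_add_one_kronecker_diagonal, blockDiagonal_conjTranspose, ← blockDiagonal_mul,
      ← blockDiagonal_mul, qfiSum_blockDiagonal p, Finset.mul_sum]
    refine Finset.sum_congr rfl fun k _ => ?_
    rw [conjTranspose_mul_add_smul_one_mul (hV k), qfiSum_add_smul_one, qfiSum_smul (hq k).le,
      QFI_eq_two_mul_qfiSum (hηherm k) HS (hV k) (hηV k)]
    ring
  · simp only [QFI_vecMulVec_self (hη _) hHS, Finset.mul_sum]
    exact Finset.sum_congr rfl fun k _ => by ring

theorem ensemble_qfi_identity
    {d K : ℕ} (hK : 0 < K)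
    (q : Fin K → ℝ) (hq : ∀ k, 0 < q k) (hqsum : ∑ k, q k = 1)
    (η : Fin K → Fin d → ℂ) (hη : ∀ k, star (η k) ⬝ᵥ η k = 1)
    (HS : Matrix (Fin d) (Fin d) ℂ) (hHS : HS.IsHermitian)
    (ε : Fin K → ℝ)
    (σ : Matrix (Fin d × Fin K) (Fin d × Fin K) ℂ)
    (hσdef : σ = ∑ k, ((q k : ℝ) : ℂ) •
      (Matrix.vecMulVec (η k) (star (η k)) ⊗ₖ Matrix.single k k (1 : ℂ)))
    (hσ : σ.IsHermitian)
    (hηherm : ∀ k, (Matrix.vecMulVec (η k) (star (η k))).IsHermitian) :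
    QFI hσ (HS ⊗ₖ (1 : Matrix (Fin K) (Fin K) ℂ) +
        (1 : Matrix (Fin d) (Fin d) ℂ) ⊗ₖ Matrix.diagonal (fun k => ((ε k : ℝ) : ℂ))) =
      ∑ k, q k * QFI (hηherm k) HS ∧
    ∑ k, q k * QFI (hηherm k) HS = 4 * ∑ k, q k * varVec HS (η k) :=
  ensemble_qfi_identity_general q hq η hη HS hHS ε σ hσdef hσ hηherm

end
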